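/- arXiv:2412.20115 — 5 statements merged into one kernel-verified Lean document; each statement's English description precedes it below -/
import Mathlib

section
/- Let f : E → ℝ be differentiable and L-smooth with L > 0, and let x : ℕ → E be the gradient descent sequence with constant step size λ = 1/L, i.e., x_{k+1} = x_k - (1/L)·∇f(x_k). Then for every n ≥ 1, (1/(2L))·∑_{k=0}^{n-1} ‖∇f(x_k)‖² ≤ f(x_0) - f(x_n). -/
/-!
Along the segment from `a` to `b`, the function
`t ↦ f (a + t • (b - a)) - t ⟪∇f a, b - a⟫ - (L / 2) t² ‖b - a‖²` has derivative
`⟪∇f (a + t • (b - a)) - ∇f a, b - a⟫ - L t ‖b - a‖² ≤ 0` for `t ≥ 0`, which gives the descent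
lemma `f b ≤ f a + ⟪∇f a, b - a⟫ + (L / 2) ‖b - a‖²`. With `b = a - (1 / L) ∇f a` each gradient
step decreases `f` by at least `‖∇f a‖² / (2L)`, and these decreases telescope.
-/

open RealInnerProductSpace

theorem Finset.sum_range_le_sub_of_le_sub {u c : ℕ → ℝ} (h : ∀ k, u (k + 1) ≤ u k - c k)
    (n : ℕ) : ∑ k ∈ Finset.range n, c k ≤ u 0 - u n := by
  rw [← Finset.sum_range_sub']
  exact Finset.sum_le_sum fun k _ => by linarith [h k]

section Smooth

variable {E : Type*} [NormedAddCommGroup E] [InnerProductSpace ℝ E] [CompleteSpace E]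
  {f : E → ℝ} {f' : E → E} {L : ℝ}

theorem HasGradientAt.hasDerivAt_comp_add_smul {g a v : E} {t : ℝ}
    (h : HasGradientAt f g (a + t • v)) : HasDerivAt (fun s : ℝ => f (a + s • v)) ⟪g, v⟫ t := by
  have hline : HasDerivAt (fun s : ℝ => a + s • v) v t := by
    simpa using ((hasDerivAt_id t).smul_const v).const_add a
  simpa [Function.comp_def] using h.hasFDerivAt.comp_hasDerivAt t hline

theorem descent_lemma (hdiff : ∀ x, HasGradientAt f (f' x) x)
    (hsmooth : ∀ x y, ‖f' x - f' y‖ ≤ L * ‖x - y‖) (a b : E) :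
    f b ≤ f a + ⟪f' a, b - a⟫ + L / 2 * ‖b - a‖ ^ 2 := by
  set v := b - a
  let φ : ℝ → ℝ := fun t => f (a + t • v) - t * ⟪f' a, v⟫ - L / 2 * t ^ 2 * ‖v‖ ^ 2
  have hφ : ∀ t, HasDerivAt φ (⟪f' (a + t • v), v⟫ - ⟪f' a, v⟫ - L * t * ‖v‖ ^ 2) t := by
    intro t
    refine (((hdiff (a + t • v)).hasDerivAt_comp_add_smul.fun_sub
      ((hasDerivAt_id' t).mul_const ⟪f' a, v⟫)).fun_sub
      (((hasDerivAt_pow 2 t).const_mul (L / 2)).mul_const (‖v‖ ^ 2))).congr_deriv ?_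
    simp only [Nat.cast_ofNat, Nat.reduceSub, pow_one, one_mul]
    ring
  have hφ_nonpos : ∀ t ∈ interior (Set.Ici (0 : ℝ)),
      ⟪f' (a + t • v), v⟫ - ⟪f' a, v⟫ - L * t * ‖v‖ ^ 2 ≤ 0 := by
    intro t ht
    rw [interior_Ici, Set.mem_Ioi] at ht
    have hlip : ‖f' (a + t • v) - f' a‖ ≤ L * (t * ‖v‖) := by
      simpa [norm_smul, abs_of_pos ht] using hsmooth (a + t • v) a
    refine sub_nonpos.mpr ?_
    calc ⟪f' (a + t • v), v⟫ - ⟪f' a, v⟫ = ⟪f' (a + t • v) - f' a, v⟫ := (inner_sub_left ..).symm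
      _ ≤ ‖f' (a + t • v) - f' a‖ * ‖v‖ := real_inner_le_norm _ _
      _ ≤ L * (t * ‖v‖) * ‖v‖ := by gcongr
      _ = L * t * ‖v‖ ^ 2 := by ring
  have hanti : AntitoneOn φ (Set.Ici 0) :=
    antitoneOn_of_hasDerivWithinAt_nonpos (convex_Ici 0)
      (fun t _ => (hφ t).continuousAt.continuousWithinAt)
      (fun t _ => (hφ t).hasDerivWithinAt) hφ_nonpos
  have h := hanti Set.self_mem_Ici (show (1 : ℝ) ∈ Set.Ici 0 by norm_num) zero_le_one
  simp only [φ, v, one_smul, add_sub_cancel, zero_smul, add_zero] at h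
  linarith

theorem gradient_step_le (hdiff : ∀ x, HasGradientAt f (f' x) x)
    (hsmooth : ∀ x y, ‖f' x - f' y‖ ≤ L * ‖x - y‖) (η : ℝ) (a : E) :
    f (a - η • f' a) ≤ f a - η * (1 - L * η / 2) * ‖f' a‖ ^ 2 := by
  have h := descent_lemma hdiff hsmooth a (a - η • f' a)
  rw [sub_sub_cancel_left, inner_neg_right, real_inner_smul_right, real_inner_self_eq_norm_sq,
    norm_neg, norm_smul, mul_pow, Real.norm_eq_abs, sq_abs] at h
  linarith

end Smooth

theorem gd_sum_grad_norm_bound {E : Type*} [NormedAddCommGroup E] [InnerProductSpace ℝ E] [CompleteSpace E]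
    (f : E → ℝ) (f' : E → E) (L : ℝ) (hL : 0 < L)
    (hdiff : ∀ x, HasGradientAt f (f' x) x)
    (hsmooth : ∀ x y, ‖f' x - f' y‖ ≤ L * ‖x - y‖)
    (x : ℕ → E)
    (hiter : ∀ k, x (k + 1) = x k - (1 / L) • f' (x k)) :
    ∀ n : ℕ, 1 ≤ n →
      (1 / (2 * L)) * ∑ k ∈ Finset.range n, ‖f' (x k)‖ ^ 2 ≤ f (x 0) - f (x n) := by
  intro n _
  have hstep : ∀ k, f (x (k + 1)) ≤ f (x k) - 1 / (2 * L) * ‖f' (x k)‖ ^ 2 := by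
    intro k
    have hrate : 1 / L * (1 - L * (1 / L) / 2) = 1 / (2 * L) := by field_simp; ring
    simpa only [hiter k, hrate] using gradient_step_le hdiff hsmooth (1 / L) (x k)
  rw [Finset.mul_sum]
  exact Finset.sum_range_le_sub_of_le_sub (u := fun k => f (x k)) hstep n
end

section
/- Let f : E → ℝ be differentiable, L-smooth, and μ-strongly convex with 0 < μ ≤ L, and let x* ∈ E be a global minimizer of f. Let x : ℕ → E be the gradient descent sequence with constant step size λ = 1/L starting from x_0. Then for every n ≥ 1, ‖x_n - x*‖ ≤ (1 - μ/L)^{n/2}·‖x_0 - x*‖ (equivalently, ‖x_n - x*‖² ≤ (1 - μ/L)^n·‖x_0 - x*‖²). -/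
/-!
The descent lemma for the `L`-smooth `f` shows that one gradient step from `x` lowers `f` by at
least `‖∇f x‖² / (2L)`, so `‖∇f x‖² / (2L) ≤ f x - f x*`. Adding strong convexity at `(x, x*)`
gives `‖∇f x‖² / (2L) + μ/2 ‖x - x*‖² ≤ ⟪∇f x, x - x*⟫`, and expanding
`‖x - ∇f x / L - x*‖²` with this bound contracts the squared distance to `x*` by `1 - μ/L`
in every step.
-/

open RealInnerProductSpace

theorem le_rpow_half_mul_of_sq_le {a b c : ℝ} (n : ℕ) (ha : 0 ≤ a) (hb : 0 ≤ b) (hc : 0 ≤ c)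
    (h : a ^ 2 ≤ c ^ n * b ^ 2) : a ≤ c ^ ((n : ℝ) / 2) * b := by
  rw [Real.rpow_div_two_eq_sqrt _ hc, Real.rpow_natCast, ← sq_le_sq₀ ha (by positivity), mul_pow,
    ← pow_mul, mul_comm n, pow_mul, Real.sq_sqrt hc]
  exact h

section InnerProductSpace

variable {E : Type*} [NormedAddCommGroup E] [InnerProductSpace ℝ E]

theorem norm_sub_smul_sq_le_of_le_inner {r g : E} {L μ : ℝ} (hL : 0 < L)
    (h : ‖g‖ ^ 2 / (2 * L) + μ / 2 * ‖r‖ ^ 2 ≤ ⟪g, r⟫) :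
    ‖r - (1 / L) • g‖ ^ 2 ≤ (1 - μ / L) * ‖r‖ ^ 2 := by
  rw [norm_sub_sq_real, real_inner_smul_right, norm_smul, Real.norm_of_nonneg (by positivity),
    real_inner_comm]
  have := mul_le_mul_of_nonneg_left h (by positivity : (0 : ℝ) ≤ 2 / L)
  have hval : 2 / L * (‖g‖ ^ 2 / (2 * L) + μ / 2 * ‖r‖ ^ 2)
      = (1 / L * ‖g‖) ^ 2 + μ / L * ‖r‖ ^ 2 := by
    field_simp
  linarith [show 2 / L * ⟪g, r⟫ = 2 * (1 / L * ⟪g, r⟫) by ring,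
    show (1 - μ / L) * ‖r‖ ^ 2 = ‖r‖ ^ 2 - μ / L * ‖r‖ ^ 2 by ring]

section Smooth

variable [CompleteSpace E] {f : E → ℝ} {f' : E → E} {L : ℝ}

theorem le_add_inner_add_sq_of_gradient_lipschitz
    (hf : ∀ x, HasGradientAt f (f' x) x) (hL : ∀ x y, ‖f' x - f' y‖ ≤ L * ‖x - y‖) (x y : E) :
    f y ≤ f x + ⟪f' x, y - x⟫ + L / 2 * ‖y - x‖ ^ 2 := by
  set v := y - x
  -- `f` along the segment, minus its claimed quadratic upper model, is antitone in `t ≥ 0`.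
  set φ : ℝ → ℝ := fun t ↦ f (x + t • v) - t * ⟪f' x, v⟫ - L / 2 * t ^ 2 * ‖v‖ ^ 2
  have hφ : ∀ t, HasDerivAt φ (⟪f' (x + t • v), v⟫ - ⟪f' x, v⟫ - L * t * ‖v‖ ^ 2) t := by
    intro t
    have hline : HasDerivAt (fun t : ℝ ↦ x + t • v) v t := by
      simpa using ((hasDerivAt_id t).smul_const v).const_add x
    have hf_line := (hf (x + t • v)).hasFDerivAt.comp_hasDerivAt t hline
    simp only [InnerProductSpace.toDual_apply_apply] at hf_line
    refine ((hf_line.sub ((hasDerivAt_id t).mul_const ⟪f' x, v⟫)).sub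
      (((hasDerivAt_pow 2 t).const_mul (L / 2)).mul_const (‖v‖ ^ 2))).congr_deriv ?_
    ring
  have hanti : AntitoneOn φ (Set.Ici 0) := by
    refine antitoneOn_of_hasDerivWithinAt_nonpos (convex_Ici 0)
      (fun t _ ↦ (hφ t).continuousAt.continuousWithinAt)
      (fun t _ ↦ (hφ t).hasDerivWithinAt) fun t ht ↦ ?_
    rw [interior_Ici] at ht
    have hlip : ‖f' (x + t • v) - f' x‖ ≤ L * (t * ‖v‖) := by
      simpa [norm_smul, abs_of_pos (Set.mem_Ioi.mp ht)] using hL (x + t • v) x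
    have := real_inner_le_norm (f' (x + t • v) - f' x) v
    rw [inner_sub_left] at this
    nlinarith [mul_le_mul_of_nonneg_right hlip (norm_nonneg v)]
  have hφ0 : φ 0 = f x := by simp [φ]
  have hφ1 : φ 1 = f y - ⟪f' x, v⟫ - L / 2 * ‖v‖ ^ 2 := by simp [φ, v]
  linarith [hanti Set.self_mem_Ici (Set.mem_Ici.mpr zero_le_one) zero_le_one]

theorem norm_sq_gradient_div_le_sub_of_forall_le (hL₀ : 0 < L)
    (hf : ∀ x, HasGradientAt f (f' x) x) (hL : ∀ x y, ‖f' x - f' y‖ ≤ L * ‖x - y‖)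
    {xstar : E} (hmin : ∀ y, f xstar ≤ f y) (x : E) :
    ‖f' x‖ ^ 2 / (2 * L) ≤ f x - f xstar := by
  have hdescent := le_add_inner_add_sq_of_gradient_lipschitz hf hL x (x - (1 / L) • f' x)
  rw [sub_sub_cancel_left, inner_neg_right, real_inner_smul_right, real_inner_self_eq_norm_sq,
    norm_neg, norm_smul, Real.norm_of_nonneg (by positivity)] at hdescent
  have := hmin (x - (1 / L) • f' x)
  have hval : 1 / L * ‖f' x‖ ^ 2 - L / 2 * (1 / L * ‖f' x‖) ^ 2 = ‖f' x‖ ^ 2 / (2 * L) := by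
    field_simp; ring
  linarith

theorem norm_gradient_step_sub_sq_le {μ : ℝ} (hL₀ : 0 < L)
    (hf : ∀ x, HasGradientAt f (f' x) x) (hL : ∀ x y, ‖f' x - f' y‖ ≤ L * ‖x - y‖)
    (hμ : ∀ x y, f x + ⟪f' x, y - x⟫ + (μ / 2) * ‖y - x‖ ^ 2 ≤ f y)
    {xstar : E} (hmin : ∀ y, f xstar ≤ f y) (x : E) :
    ‖x - (1 / L) • f' x - xstar‖ ^ 2 ≤ (1 - μ / L) * ‖x - xstar‖ ^ 2 := by
  rw [sub_right_comm]
  refine norm_sub_smul_sq_le_of_le_inner hL₀ ?_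
  have hstrong := hμ x xstar
  rw [← neg_sub x xstar, inner_neg_right, norm_neg] at hstrong
  linarith [norm_sq_gradient_div_le_sub_of_forall_le hL₀ hf hL hmin x]

end Smooth

end InnerProductSpace

theorem gd_strongly_convex_linear_rate {E : Type*} [NormedAddCommGroup E]
    [InnerProductSpace ℝ E] [CompleteSpace E]
    (f : E → ℝ) (f' : E → E) (L μ : ℝ) (hμ : 0 < μ) (hμL : μ ≤ L)
    (hdiff : ∀ x, HasGradientAt f (f' x) x)
    (hsmooth : ∀ x y, ‖f' x - f' y‖ ≤ L * ‖x - y‖)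
    (hstrong : ∀ x y, f x + ⟪f' x, y - x⟫ + (μ / 2) * ‖y - x‖ ^ 2 ≤ f y)
    (xstar : E) (hmin : ∀ y, f xstar ≤ f y)
    (x : ℕ → E)
    (hiter : ∀ k, x (k + 1) = x k - (1 / L) • f' (x k)) :
    ∀ n : ℕ, 1 ≤ n →
      ‖x n - xstar‖ ≤ (1 - μ / L) ^ ((n : ℝ) / 2) * ‖x 0 - xstar‖ ∧
      ‖x n - xstar‖ ^ 2 ≤ (1 - μ / L) ^ n * ‖x 0 - xstar‖ ^ 2 := by
  have hL : 0 < L := hμ.trans_le hμL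
  have hrate : 0 ≤ 1 - μ / L := sub_nonneg.mpr ((div_le_one hL).mpr hμL)
  have hsq (n : ℕ) : ‖x n - xstar‖ ^ 2 ≤ (1 - μ / L) ^ n * ‖x 0 - xstar‖ ^ 2 :=
    le_geom (u := fun k ↦ ‖x k - xstar‖ ^ 2) hrate n fun k _ ↦ by
      simpa only [hiter k] using norm_gradient_step_sub_sq_le hL hdiff hsmooth hstrong hmin (x k)
  intro n _
  exact ⟨le_rpow_half_mul_of_sq_le n (norm_nonneg _) (norm_nonneg _) hrate (hsq n), hsq n⟩
end

section
/- Let f : E → ℝ be differentiable and convex, let g : E → ℝ be convex and continuous, and let λ > 0. Then x* ∈ E is a global minimizer of F = f + g if and only if x* is a global minimizer over y ∈ E of the function y ↦ (1/(2λ))·‖y - (x* - λ·∇f(x*))‖² + g(y). -/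
/-!
Write `p = ∇f(x*)` and `c = x* - λ p`. The quadratic `q y = ‖y - c‖² / (2λ)` is convex with
`∇q(x*) = p`, so `f` and `q` are two convex functions with the same gradient at `x*`. For a convex
`h` differentiable at `x` with gradient `p`, `x` minimizes `h + g` exactly when
`g x ≤ g y + ⟪p, y - x⟫` for all `y` (that is, `-p ∈ ∂g(x)`): one direction is the gradient
inequality `h x + ⟪p, y - x⟫ ≤ h y`, the other compares the values of `h + g` along the segment
from `x` to `y` and lets the step go to zero. Both minimality conditions of the theorem are
therefore the same condition.
-/

open RealInnerProductSpace Filter Set Topology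

section Convex

variable {E : Type*} [AddCommGroup E] [Module ℝ E]

theorem ConvexOn.apply_add_smul_sub_le {s : Set E} {g : E → ℝ} (hg : ConvexOn ℝ s g) {x y : E}
    (hx : x ∈ s) (hy : y ∈ s) {t : ℝ} (ht₀ : 0 ≤ t) (ht₁ : t ≤ 1) :
    g (x + t • (y - x)) ≤ g x + t * (g y - g x) := by
  have hseg : (1 - t) • x + t • y = x + t • (y - x) := by
    rw [sub_smul, one_smul, smul_sub]; abel
  have h := hg.2 hx hy (sub_nonneg.2 ht₁) ht₀ (sub_add_cancel 1 t)
  rw [hseg, smul_eq_mul, smul_eq_mul] at h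
  linarith

theorem convexOn_univ_mul_norm_sub_sq {F : Type*} [SeminormedAddCommGroup F] [NormedSpace ℝ F]
    {a : ℝ} (ha : 0 ≤ a) (c : F) : ConvexOn ℝ univ (fun y ↦ a * ‖y - c‖ ^ 2) := by
  simpa [dist_eq_norm] using ((convexOn_univ_dist c).pow (fun _ _ ↦ dist_nonneg) 2).smul ha

end Convex

section Gradient

variable {E : Type*} [NormedAddCommGroup E] [InnerProductSpace ℝ E] [CompleteSpace E]

theorem HasGradientAt.tendsto_slope_zero_right {h : E → ℝ} {p x : E} (hp : HasGradientAt h p x)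
    (v : E) : Tendsto (fun t : ℝ ↦ t⁻¹ * (h (x + t • v) - h x)) (𝓝[>] 0) (𝓝 ⟪p, v⟫) := by
  have hline : HasDerivAt (fun t : ℝ ↦ h (x + t • v)) ⟪p, v⟫ 0 :=
    hp.hasFDerivAt.hasLineDerivAt v
  simpa using hline.tendsto_slope_zero_right

theorem ConvexOn.add_inner_le_of_hasGradientAt {h : E → ℝ} {p x : E}
    (hh : ConvexOn ℝ univ h) (hp : HasGradientAt h p x) (y : E) :
    h x + ⟪p, y - x⟫ ≤ h y := by
  have hslope : ∀ᶠ t in 𝓝[>] (0 : ℝ), t⁻¹ * (h (x + t • (y - x)) - h x) ≤ h y - h x := by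
    filter_upwards [Ioc_mem_nhdsGT one_pos] with t ⟨ht₀, ht₁⟩
    rw [inv_mul_le_iff₀ ht₀]
    linarith [hh.apply_add_smul_sub_le (mem_univ x) (mem_univ y) ht₀.le ht₁]
  linarith [le_of_tendsto (hp.tendsto_slope_zero_right (y - x)) hslope]

theorem HasGradientAt.le_add_inner_of_forall_add_le {h g : E → ℝ} {p x : E}
    (hp : HasGradientAt h p x) (hg : ConvexOn ℝ univ g) (hmin : ∀ y, h x + g x ≤ h y + g y)
    (y : E) : g x ≤ g y + ⟪p, y - x⟫ := by
  have hslope : ∀ᶠ t in 𝓝[>] (0 : ℝ), g x - g y ≤ t⁻¹ * (h (x + t • (y - x)) - h x) := by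
    filter_upwards [Ioc_mem_nhdsGT one_pos] with t ⟨ht₀, ht₁⟩
    rw [le_inv_mul_iff₀ ht₀]
    linarith [hmin (x + t • (y - x)),
      hg.apply_add_smul_sub_le (mem_univ x) (mem_univ y) ht₀.le ht₁]
  linarith [ge_of_tendsto (hp.tendsto_slope_zero_right (y - x)) hslope]

theorem ConvexOn.forall_add_le_add_iff_of_hasGradientAt {h g : E → ℝ} {p x : E}
    (hh : ConvexOn ℝ univ h) (hp : HasGradientAt h p x) (hg : ConvexOn ℝ univ g) :
    (∀ y, h x + g x ≤ h y + g y) ↔ ∀ y, g x ≤ g y + ⟪p, y - x⟫ :=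
  ⟨hp.le_add_inner_of_forall_add_le hg, fun hsub y ↦ by
    linarith [hsub y, hh.add_inner_le_of_hasGradientAt hp y]⟩

theorem hasGradientAt_mul_norm_sub_sq (a : ℝ) (c x : E) :
    HasGradientAt (fun y ↦ a * ‖y - c‖ ^ 2) ((2 * a) • (x - c)) x := by
  rw [hasGradientAt_iff_hasFDerivAt]
  refine (((hasFDerivAt_id x).sub_const c).norm_sq.const_mul a).congr_fderiv ?_
  ext v
  simp only [InnerProductSpace.toDual_apply_apply, smul_apply,
    ContinuousLinearMap.comp_id, coe_innerSL_apply, id_eq, map_smul, smul_eq_mul, nsmul_eq_mul,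
    Nat.cast_ofNat]
  ring

end Gradient

theorem prox_fixed_point_iff_minimizer_general {E : Type*} [NormedAddCommGroup E]
    [InnerProductSpace ℝ E] [CompleteSpace E]
    (f g : E → ℝ) (f' : E → E)
    (hdiff : ∀ x, HasGradientAt f (f' x) x)
    (hfconv : ConvexOn ℝ Set.univ f)
    (hgconv : ConvexOn ℝ Set.univ g)
    (lam : ℝ) (hlam : 0 < lam) (xstar : E) :
    (∀ y : E, f xstar + g xstar ≤ f y + g y) ↔
      (∀ y : E,
        (1 / (2 * lam)) * ‖xstar - (xstar - lam • f' xstar)‖ ^ 2 + g xstar ≤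
          (1 / (2 * lam)) * ‖y - (xstar - lam • f' xstar)‖ ^ 2 + g y) := by
  set p := f' xstar
  have hq_grad : HasGradientAt (fun y ↦ 1 / (2 * lam) * ‖y - (xstar - lam • p)‖ ^ 2) p xstar := by
    convert hasGradientAt_mul_norm_sub_sq (1 / (2 * lam)) (xstar - lam • p) xstar using 1
    rw [sub_sub_cancel, smul_smul, show 2 * (1 / (2 * lam)) * lam = 1 by field_simp, one_smul]
  have hq_conv := convexOn_univ_mul_norm_sub_sq (a := 1 / (2 * lam)) (by positivity)
    (xstar - lam • p)
  rw [hfconv.forall_add_le_add_iff_of_hasGradientAt (hdiff xstar) hgconv,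
    hq_conv.forall_add_le_add_iff_of_hasGradientAt hq_grad hgconv]

theorem prox_fixed_point_iff_minimizer {E : Type*} [NormedAddCommGroup E]
    [InnerProductSpace ℝ E] [CompleteSpace E]
    (f g : E → ℝ) (f' : E → E)
    (hdiff : ∀ x, HasGradientAt f (f' x) x)
    (hfconv : ConvexOn ℝ Set.univ f)
    (hgconv : ConvexOn ℝ Set.univ g) (hgcont : Continuous g)
    (lam : ℝ) (hlam : 0 < lam) (xstar : E) :
    (∀ y : E, f xstar + g xstar ≤ f y + g y) ↔
      (∀ y : E,
        (1 / (2 * lam)) * ‖xstar - (xstar - lam • f' xstar)‖ ^ 2 + g xstar ≤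
          (1 / (2 * lam)) * ‖y - (xstar - lam • f' xstar)‖ ^ 2 + g y) :=
  prox_fixed_point_iff_minimizer_general f g f' hdiff hfconv hgconv lam hlam xstar
end

section
/- Let f : E → ℝ be differentiable, convex, and L-smooth with L > 0, let g : E → ℝ be convex and continuous, and let 0 < λ ≤ 1/L. Let x_k ∈ E and let x_{k+1} be a global minimizer over y ∈ E of y ↦ (1/(2λ))·‖y - (x_k - λ·∇f(x_k))‖² + g(y). Then with F = f + g, F(x_{k+1}) ≤ F(x_k) - (1/(2λ))·‖x_{k+1} - x_k‖²; in particular the proximal gradient iteration produces monotonically non-increasing values of F. -/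
/-!
The prox objective `y ↦ ‖y - (xₖ - λ ∇f xₖ)‖² / (2λ) + g y` is `1/λ`-strongly convex, so its
minimizer `xₖ₊₁` satisfies quadratic growth: its value at `xₖ` exceeds the minimum by at least
`‖xₖ₊₁ - xₖ‖² / (2λ)`. Expanding the square, this reads
`g xₖ₊₁ + ⟪∇f xₖ, xₖ₊₁ - xₖ⟫ + ‖xₖ₊₁ - xₖ‖² / λ ≤ g xₖ`. Adding the descent lemma
`f xₖ₊₁ ≤ f xₖ + ⟪∇f xₖ, xₖ₊₁ - xₖ⟫ + L/2 ‖xₖ₊₁ - xₖ‖²` and using `L/2 ≤ 1/(2λ)` gives the claim.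
-/

open RealInnerProductSpace

section

variable {E : Type*} [NormedAddCommGroup E]

section NormedSpace

variable [NormedSpace ℝ E] {s : Set E} {m : ℝ}

lemma StrongConvexOn.add_convexOn {f g : E → ℝ} (hf : StrongConvexOn s m f) (hg : ConvexOn ℝ s g) :
    StrongConvexOn s m (f + g) := by
  simpa only [StrongConvexOn, add_zero] using hf.add (uniformConvexOn_zero.2 hg)

open Filter Topology in
lemma StrongConvexOn.add_sq_le_of_isMinOn {φ : E → ℝ} {x y : E} (hφ : StrongConvexOn s m φ)
    (hmin : IsMinOn φ s x) (hx : x ∈ s) (hy : y ∈ s) : φ x + m / 2 * ‖y - x‖ ^ 2 ≤ φ y := by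
  set K := m / 2 * ‖y - x‖ ^ 2
  have h_segment : ∀ t ∈ Set.Ioc (0 : ℝ) 1, φ x + (1 - t) * K ≤ φ y := by
    rintro t ⟨ht0, ht1⟩
    have h_min : φ x ≤ φ ((1 - t) • x + t • y) :=
      hmin (hφ.1 hx hy (sub_nonneg.2 ht1) ht0.le (sub_add_cancel 1 t))
    have h_conv : φ ((1 - t) • x + t • y) ≤ (1 - t) * φ x + t * φ y - (1 - t) * t * K := by
      have := hφ.2 hx hy (sub_nonneg.2 ht1) ht0.le (sub_add_cancel 1 t)
      rwa [norm_sub_rev] at this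
    have : t * (φ x + (1 - t) * K) ≤ t * φ y := by linarith
    exact le_of_mul_le_mul_left this ht0
  have h_lim : Tendsto (fun t : ℝ ↦ φ x + (1 - t) * K) (𝓝[>] 0) (𝓝 (φ x + (1 - 0) * K)) :=
    ((by fun_prop : Continuous fun t : ℝ ↦ φ x + (1 - t) * K).tendsto 0).mono_left
      nhdsWithin_le_nhds
  simpa using le_of_tendsto h_lim (mem_of_superset (Ioc_mem_nhdsGT zero_lt_one) h_segment)

end NormedSpace

section InnerProductSpace

variable [InnerProductSpace ℝ E]

lemma strongConvexOn_univ_mul_norm_sub_sq (c : ℝ) (v : E) :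
    StrongConvexOn Set.univ (2 * c) fun y ↦ c * ‖y - v‖ ^ 2 := by
  have h_affine : (fun y ↦ c * ‖y - v‖ ^ 2 - 2 * c / 2 * ‖y‖ ^ 2) =
      fun y ↦ (-(2 * c) • innerₛₗ ℝ v) y + c * ‖v‖ ^ 2 := by
    ext y
    simp only [LinearMap.smul_apply, innerₛₗ_apply_apply, smul_eq_mul, norm_sub_sq_real,
      real_inner_comm]
    ring
  rw [strongConvexOn_iff_convex, h_affine]
  exact (LinearMap.convexOn _ convex_univ).add_const _

lemma one_div_two_mul_norm_sub_sub_smul_sq {lam : ℝ} (hlam : lam ≠ 0) (x y p : E) :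
    1 / (2 * lam) * ‖y - (x - lam • p)‖ ^ 2 =
      1 / (2 * lam) * ‖y - x‖ ^ 2 + ⟪p, y - x⟫ + lam / 2 * ‖p‖ ^ 2 := by
  rw [sub_sub_eq_add_sub, add_sub_right_comm, norm_add_sq_real, inner_smul_right, norm_smul,
    Real.norm_eq_abs, mul_pow, sq_abs, real_inner_comm]
  field_simp

lemma le_add_inner_add_sq_of_lipschitz_gradient [CompleteSpace E] {f : E → ℝ} {f' : E → E}
    {L : ℝ} (hf : ∀ x, HasGradientAt f (f' x) x) (hf' : ∀ x y, ‖f' x - f' y‖ ≤ L * ‖x - y‖)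
    (x y : E) : f y ≤ f x + ⟪f' x, y - x⟫ + L / 2 * ‖y - x‖ ^ 2 := by
  set d := y - x
  let φ : ℝ → ℝ := fun t ↦ f (x + t • d) - t * ⟪f' x, d⟫ - L / 2 * ‖d‖ ^ 2 * t ^ 2
  have hφ : ∀ t, HasDerivAt φ (⟪f' (x + t • d), d⟫ - ⟪f' x, d⟫ - L * ‖d‖ ^ 2 * t) t := by
    intro t
    have hline : HasDerivAt (fun s : ℝ ↦ x + s • d) d t := by
      simpa using ((hasDerivAt_id t).smul_const d).const_add x
    refine (((hf (x + t • d)).hasFDerivAt.comp_hasDerivAt t hline).sub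
      ((hasDerivAt_id t).mul_const ⟪f' x, d⟫) |>.sub
        ((hasDerivAt_pow 2 t).const_mul (L / 2 * ‖d‖ ^ 2))).congr_deriv ?_
    simp only [InnerProductSpace.toDual_apply_apply]
    ring
  have hφ' : ∀ t ∈ interior (Set.Ici (0 : ℝ)),
      ⟪f' (x + t • d), d⟫ - ⟪f' x, d⟫ - L * ‖d‖ ^ 2 * t ≤ 0 := by
    intro t ht
    rw [interior_Ici, Set.mem_Ioi] at ht
    calc ⟪f' (x + t • d), d⟫ - ⟪f' x, d⟫ - L * ‖d‖ ^ 2 * t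
        = ⟪f' (x + t • d) - f' x, d⟫ - L * ‖d‖ ^ 2 * t := by rw [inner_sub_left]
      _ ≤ ‖f' (x + t • d) - f' x‖ * ‖d‖ - L * ‖d‖ ^ 2 * t := by
        gcongr; exact real_inner_le_norm _ _
      _ ≤ L * ‖(x + t • d) - x‖ * ‖d‖ - L * ‖d‖ ^ 2 * t := by gcongr; exact hf' _ _
      _ = 0 := by rw [add_sub_cancel_left, norm_smul, Real.norm_eq_abs, abs_of_pos ht]; ring
  have hanti := antitoneOn_of_hasDerivWithinAt_nonpos (convex_Ici 0)
    (fun t _ ↦ (hφ t).continuousAt.continuousWithinAt) (fun t _ ↦ (hφ t).hasDerivWithinAt) hφ'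
  have h01 : φ 1 ≤ φ 0 := hanti Set.self_mem_Ici (Set.mem_Ici.mpr zero_le_one) zero_le_one
  have hφ0 : φ 0 = f x := by simp [φ]
  have hφ1 : φ 1 = f y - ⟪f' x, d⟫ - L / 2 * ‖d‖ ^ 2 := by simp [φ, d]
  linarith

end InnerProductSpace

end

theorem prox_gd_sufficient_decrease_general {E : Type*} [NormedAddCommGroup E]
    [InnerProductSpace ℝ E] [CompleteSpace E]
    (f g : E → ℝ) (f' : E → E) (L : ℝ) (hL : 0 < L)
    (hdiff : ∀ x, HasGradientAt f (f' x) x)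
    (hsmooth : ∀ x y, ‖f' x - f' y‖ ≤ L * ‖x - y‖)
    (hgconv : ConvexOn ℝ Set.univ g)
    (lam : ℝ) (hlam : 0 < lam) (hlamL : lam ≤ 1 / L)
    (xk xk1 : E)
    (hprox : ∀ y : E,
      (1 / (2 * lam)) * ‖xk1 - (xk - lam • f' xk)‖ ^ 2 + g xk1 ≤
        (1 / (2 * lam)) * ‖y - (xk - lam • f' xk)‖ ^ 2 + g y)
    (F : E → ℝ) (hF : F = fun y => f y + g y) :
    F xk1 ≤ F xk - (1 / (2 * lam)) * ‖xk1 - xk‖ ^ 2 := by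
  have h_strong : StrongConvexOn Set.univ (2 * (1 / (2 * lam)))
      ((fun y ↦ 1 / (2 * lam) * ‖y - (xk - lam • f' xk)‖ ^ 2) + g) :=
    (strongConvexOn_univ_mul_norm_sub_sq _ _).add_convexOn hgconv
  have h_growth := h_strong.add_sq_le_of_isMinOn (isMinOn_univ_iff.2 hprox)
    (Set.mem_univ xk1) (Set.mem_univ xk)
  simp only [Pi.add_apply, one_div_two_mul_norm_sub_sub_smul_sq hlam.ne', sub_self, norm_zero,
    inner_zero_right, norm_sub_rev xk xk1] at h_growth
  have h_descent := le_add_inner_add_sq_of_lipschitz_gradient hdiff hsmooth xk xk1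
  have h_step : L / 2 ≤ 1 / (2 * lam) := by
    rw [le_one_div hlam hL] at hlamL
    rw [mul_comm, ← div_div]
    linarith
  have := mul_le_mul_of_nonneg_right h_step (sq_nonneg ‖xk1 - xk‖)
  subst hF
  linarith

theorem prox_gd_sufficient_decrease {E : Type*} [NormedAddCommGroup E]
    [InnerProductSpace ℝ E] [CompleteSpace E]
    (f g : E → ℝ) (f' : E → E) (L : ℝ) (hL : 0 < L)
    (hdiff : ∀ x, HasGradientAt f (f' x) x)
    (hfconv : ConvexOn ℝ Set.univ f)
    (hsmooth : ∀ x y, ‖f' x - f' y‖ ≤ L * ‖x - y‖)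
    (hgconv : ConvexOn ℝ Set.univ g) (hgcont : Continuous g)
    (lam : ℝ) (hlam : 0 < lam) (hlamL : lam ≤ 1 / L)
    (xk xk1 : E)
    (hprox : ∀ y : E,
      (1 / (2 * lam)) * ‖xk1 - (xk - lam • f' xk)‖ ^ 2 + g xk1 ≤
        (1 / (2 * lam)) * ‖y - (xk - lam • f' xk)‖ ^ 2 + g y)
    (F : E → ℝ) (hF : F = fun y => f y + g y) :
    F xk1 ≤ F xk - (1 / (2 * lam)) * ‖xk1 - xk‖ ^ 2 :=
  prox_gd_sufficient_decrease_general f g f' L hL hdiff hsmooth hgconv lam hlam hlamL xk xk1 hprox F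
    hF
end

section
/- Let f : E → ℝ be differentiable, L-smooth, and μ-strongly convex with 0 < μ ≤ L, let g : E → ℝ be convex and continuous, let 0 < λ ≤ 1/L, and let x* ∈ E be a global minimizer of F = f + g. Let x_k ∈ E, let x_{k+1} be a global minimizer over y ∈ E of y ↦ (1/(2λ))·‖y - (x_k - λ·∇f(x_k))‖² + g(y), and set G = (1/λ)·(x_k - x_{k+1}). Then ‖x_k - x*‖ ≤ (2/μ)·‖G‖. -/
/-! The optimality condition of the proximal step says that `G - ∇f(x_k)` is a subgradient of `g`
at `x_{k+1}`. Adding strong convexity of `f` at `x_k` and the bound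
`f(x_{k+1}) ≤ f(x_k) - λ⟪∇f(x_k), G⟫ + Lλ²‖G‖²` (convexity at `x_{k+1}` plus the Lipschitz gradient)
gives, for every `y`,
  `F(y) ≥ F(x_{k+1}) + ⟪G, y - x_k⟫ + λ(1 - Lλ)‖G‖² + (μ/2)‖y - x_k‖²`.
At `y = x*` the left side is at most `F(x_{k+1})` and `λL ≤ 1`, so
`(μ/2)‖x_k - x*‖² ≤ ⟪G, x_k - x*⟫ ≤ ‖G‖‖x_k - x*‖`. -/

open RealInnerProductSpace Set Filter Topology

lemma nonpos_of_forall_le_mul {a b : ℝ} (h : ∀ t ∈ Ioc (0 : ℝ) 1, a ≤ t * b) : a ≤ 0 := by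
  have hlim : Tendsto (fun t : ℝ => t * b) (𝓝[>] 0) (𝓝 0) := by
    simpa using ((continuous_mul_const b).tendsto 0).mono_left nhdsWithin_le_nhds
  exact ge_of_tendsto hlim (eventually_of_mem (Ioc_mem_nhdsGT one_pos) h)

section

variable {E : Type*} [NormedAddCommGroup E] [InnerProductSpace ℝ E]

/-- Moving from the minimizer `x` towards `y` along the segment costs `O(t²)` in the quadratic
term but gains `t` times the convexity gap of `g`, so that gap is bounded by `2c⟪v - x, y - x⟫`. -/
theorem ConvexOn.prox_optimality {g : E → ℝ} (hg : ConvexOn ℝ univ g) {c : ℝ} {v x : E}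
    (hx : ∀ y, c * ‖x - v‖ ^ 2 + g x ≤ c * ‖y - v‖ ^ 2 + g y) (y : E) :
    g x + 2 * c * ⟪v - x, y - x⟫ ≤ g y := by
  suffices h : g x + 2 * c * ⟪v - x, y - x⟫ - g y ≤ 0 by linarith
  refine nonpos_of_forall_le_mul (b := c * ‖y - x‖ ^ 2) fun t ⟨ht0, ht1⟩ => ?_
  have hmin := hx (x + t • (y - x))
  have hexp : ‖x + t • (y - x) - v‖ ^ 2
      = ‖x - v‖ ^ 2 - 2 * t * ⟪v - x, y - x⟫ + t ^ 2 * ‖y - x‖ ^ 2 := by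
    rw [show x + t • (y - x) - v = -(v - x) + t • (y - x) by abel, norm_add_sq_real,
      inner_neg_left, real_inner_smul_right, norm_neg, norm_smul, mul_pow, Real.norm_eq_abs,
      sq_abs, norm_sub_rev]
    ring
  have hseg : g (x + t • (y - x)) ≤ (1 - t) * g x + t * g y := by
    have h := hg.2 (mem_univ x) (mem_univ y) (sub_nonneg.2 ht1) ht0.le (by ring)
    rwa [show (1 - t) • x + t • y = x + t • (y - x) by module] at h
  rw [hexp] at hmin
  refine le_of_mul_le_mul_left ?_ ht0
  linarith

/-- Only first-order convexity is used, not the descent lemma; hence the constant `L`, not `L / 2`. -/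
theorem le_add_inner_add_mul_norm_sq_of_lipschitz_gradient {f : E → ℝ} {f' : E → E} {L : ℝ}
    (hconv : ∀ x y, f x + ⟪f' x, y - x⟫ ≤ f y) (hlip : ∀ x y, ‖f' x - f' y‖ ≤ L * ‖x - y‖)
    (x y : E) : f y ≤ f x + ⟪f' x, y - x⟫ + L * ‖y - x‖ ^ 2 := by
  have hback := hconv y x
  have hgap : ⟪f' y - f' x, y - x⟫ ≤ L * ‖y - x‖ ^ 2 := calc
    _ ≤ ‖f' y - f' x‖ * ‖y - x‖ := real_inner_le_norm _ _
    _ ≤ L * ‖y - x‖ * ‖y - x‖ := mul_le_mul_of_nonneg_right (hlip y x) (norm_nonneg _)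
    _ = L * ‖y - x‖ ^ 2 := by ring
  rw [inner_sub_left] at hgap
  rw [← neg_sub y x, inner_neg_right] at hback
  linarith

theorem prox_grad_fundamental_inequality {f g : E → ℝ} {f' : E → E} {L μ lam : ℝ}
    (hμ : 0 ≤ μ) (hsmooth : ∀ x y, ‖f' x - f' y‖ ≤ L * ‖x - y‖)
    (hstrong : ∀ x y, f x + ⟪f' x, y - x⟫ + (μ / 2) * ‖y - x‖ ^ 2 ≤ f y)
    (hgconv : ConvexOn ℝ univ g) (hlam : 0 < lam) {xk xk1 G : E}
    (hprox : ∀ y : E,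
      (1 / (2 * lam)) * ‖xk1 - (xk - lam • f' xk)‖ ^ 2 + g xk1 ≤
        (1 / (2 * lam)) * ‖y - (xk - lam • f' xk)‖ ^ 2 + g y)
    (hG : G = (1 / lam) • (xk - xk1)) (y : E) :
    f xk1 + g xk1 + ⟪G, y - xk⟫ + lam * (1 - L * lam) * ‖G‖ ^ 2 + μ / 2 * ‖y - xk‖ ^ 2 ≤
      f y + g y := by
  have hstep : xk1 = xk - lam • G := by
    rw [hG, smul_smul, mul_one_div_cancel hlam.ne', one_smul, sub_sub_cancel]
  have hsub : g xk1 + ⟪G - f' xk, y - xk1⟫ ≤ g y := by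
    have h := hgconv.prox_optimality hprox y
    rwa [show xk - lam • f' xk - xk1 = lam • (G - f' xk) by rw [hstep]; module,
      real_inner_smul_left, ← mul_assoc, show 2 * (1 / (2 * lam)) * lam = 1 by field_simp,
      one_mul] at h
  have hdesc := le_add_inner_add_mul_norm_sq_of_lipschitz_gradient
    (fun x y => (le_add_of_nonneg_right (by positivity)).trans (hstrong x y)) hsmooth xk xk1
  have hfy := hstrong xk y
  subst hstep
  simp only [sub_sub_cancel_left, norm_neg, norm_smul, Real.norm_eq_abs, abs_of_pos hlam,
    inner_neg_right, real_inner_smul_right, inner_sub_left, inner_sub_right,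
    real_inner_self_eq_norm_sq, mul_pow] at hsub hdesc hfy ⊢
  linarith

end

theorem prox_gd_distance_bound_by_generalized_gradient_general {E : Type*} [NormedAddCommGroup E]
    [InnerProductSpace ℝ E]
    (f g : E → ℝ) (f' : E → E) (L μ : ℝ) (hμ : 0 < μ)
    (hsmooth : ∀ x y, ‖f' x - f' y‖ ≤ L * ‖x - y‖)
    (hstrong : ∀ x y, f x + ⟪f' x, y - x⟫ + (μ / 2) * ‖y - x‖ ^ 2 ≤ f y)
    (hgconv : ConvexOn ℝ Set.univ g)
    (lam : ℝ) (hlam : 0 < lam) (hlamL : lam ≤ 1 / L)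
    (F : E → ℝ) (hF : F = fun y => f y + g y)
    (xstar : E) (hmin : ∀ y, F xstar ≤ F y)
    (xk xk1 : E)
    (hprox : ∀ y : E,
      (1 / (2 * lam)) * ‖xk1 - (xk - lam • f' xk)‖ ^ 2 + g xk1 ≤
        (1 / (2 * lam)) * ‖y - (xk - lam • f' xk)‖ ^ 2 + g y)
    (G : E) (hG : G = (1 / lam) • (xk - xk1)) :
    ‖xk - xstar‖ ≤ (2 / μ) * ‖G‖ := by
  have hineq := prox_grad_fundamental_inequality hμ.le hsmooth hstrong hgconv hlam hprox hG xstar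
  have hFmin : f xstar + g xstar ≤ f xk1 + g xk1 := by simpa [hF] using hmin xk1
  have hLlam : 0 ≤ 1 - L * lam := by
    have hL : 0 < L := one_div_pos.mp (hlam.trans_le hlamL)
    rw [le_div_iff₀ hL] at hlamL
    linarith
  have hcs : ⟪G, xk - xstar⟫ ≤ ‖G‖ * ‖xk - xstar‖ := real_inner_le_norm _ _
  rw [← neg_sub xk xstar, inner_neg_right, norm_neg] at hineq
  have hquad : μ / 2 * ‖xk - xstar‖ ^ 2 ≤ ‖G‖ * ‖xk - xstar‖ := by
    linarith [mul_nonneg (mul_nonneg hlam.le hLlam) (sq_nonneg ‖G‖)]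
  have hlin : μ / 2 * ‖xk - xstar‖ ≤ ‖G‖ := by
    rcases (norm_nonneg (xk - xstar)).eq_or_lt with h0 | hpos
    · rw [← h0, mul_zero]; exact norm_nonneg G
    · exact le_of_mul_le_mul_right (by linarith) hpos
  rw [div_mul_eq_mul_div, le_div_iff₀ hμ]
  linarith

theorem prox_gd_distance_bound_by_generalized_gradient {E : Type*} [NormedAddCommGroup E]
    [InnerProductSpace ℝ E] [CompleteSpace E]
    (f g : E → ℝ) (f' : E → E) (L μ : ℝ) (hμ : 0 < μ) (hμL : μ ≤ L)
    (hdiff : ∀ x, HasGradientAt f (f' x) x)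
    (hsmooth : ∀ x y, ‖f' x - f' y‖ ≤ L * ‖x - y‖)
    (hstrong : ∀ x y, f x + ⟪f' x, y - x⟫ + (μ / 2) * ‖y - x‖ ^ 2 ≤ f y)
    (hgconv : ConvexOn ℝ Set.univ g) (hgcont : Continuous g)
    (lam : ℝ) (hlam : 0 < lam) (hlamL : lam ≤ 1 / L)
    (F : E → ℝ) (hF : F = fun y => f y + g y)
    (xstar : E) (hmin : ∀ y, F xstar ≤ F y)
    (xk xk1 : E)
    (hprox : ∀ y : E,
      (1 / (2 * lam)) * ‖xk1 - (xk - lam • f' xk)‖ ^ 2 + g xk1 ≤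
        (1 / (2 * lam)) * ‖y - (xk - lam • f' xk)‖ ^ 2 + g y)
    (G : E) (hG : G = (1 / lam) • (xk - xk1)) :
    ‖xk - xstar‖ ≤ (2 / μ) * ‖G‖ :=
  prox_gd_distance_bound_by_generalized_gradient_general f g f' L μ hμ hsmooth hstrong hgconv lam
    hlam hlamL F hF xstar hmin xk xk1 hprox G hG
end
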